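/- arXiv:2312.01434 — 5 statements merged into one kernel-verified Lean document; each statement's English description precedes it below -/
import Mathlib

section
/- Let p be an odd prime, n ≥ 1, and let f : F_{p^n} → F_{p^n} be an odd APN function. Then for all nonzero a, b ∈ F_{p^n}, the BCT entry of f at (a,b) equals the (−1)-DDT entry of f at (a,−b), i.e., B_f(a,b) = ₋₁Δ_f(a,−b). -/
/-!
For odd `f` the derivative `D_a f x = f (x + a) - f x` takes the same value at `x` and at
`-x - a`, so for APN `f` these are the only solutions of `D_a f y = D_a f x`. A boomerang pair
`(x, y)` with `b ≠ 0` must then have `y = -x - a`, and the BCT entry counts the solutions of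
`f (x + a) + f x = b`, i.e. it is the `(-1)`-DDT entry at `b`. The involution `x ↦ -x - a`
turns that entry into the one at `-b`.
-/

open Finset

/-- The `c`-DDT entry of `f` at `(a, b)`:
the number of `x` with `f (x + a) - c * f x = b`. -/
def cDDT {F : Type*} [Field F] [Fintype F] [DecidableEq F]
    (f : F → F) (c a b : F) : ℕ :=
  (Finset.univ.filter (fun x : F => f (x + a) - c * f x = b)).card

/-- The `c`-differential uniformity of `f`: the maximum of the `c`-DDT entries
over all `a, b`, where `a ≠ 0` is required when `c = 1`. -/
def cDU {F : Type*} [Field F] [Fintype F] [DecidableEq F]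
    (f : F → F) (c : F) : ℕ :=
  (Finset.univ.filter (fun ab : F × F => c = 1 → ab.1 ≠ 0)).sup
    (fun ab => cDDT f c ab.1 ab.2)

/-- The classical differential uniformity of `f`. -/
def DU {F : Type*} [Field F] [Fintype F] [DecidableEq F] (f : F → F) : ℕ :=
  cDU f 1

/-- The BCT entry of `f` at `(a, b)`: the number of pairs `(x, y)` with
`f x - f y = b` and `f (x + a) - f (y + a) = b`. -/
def BCT {F : Type*} [Field F] [Fintype F] [DecidableEq F]
    (f : F → F) (a b : F) : ℕ :=
  (Finset.univ.filter (fun xy : F × F =>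
    f xy.1 - f xy.2 = b ∧ f (xy.1 + a) - f (xy.2 + a) = b)).card

/-- The boomerang uniformity of `f`: the maximum of the BCT entries over all
nonzero `a, b`. -/
def BU {F : Type*} [Field F] [Fintype F] [DecidableEq F] (f : F → F) : ℕ :=
  (Finset.univ.filter (fun ab : F × F => ab.1 ≠ 0 ∧ ab.2 ≠ 0)).sup
    (fun ab => BCT f ab.1 ab.2)

/-- The quadratic character: `χ 0 = 0`, `χ α = 1` if `α` is a nonzero square,
and `χ α = -1` otherwise. -/
noncomputable def chi {F : Type*} [Field F] (α : F) : ℤ :=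
  letI := Classical.dec (α = 0)
  letI := Classical.dec (IsSquare α)
  if α = 0 then 0 else if IsSquare α then 1 else -1

/-- The `c`-differential spectrum entry `ω_i` of a power function:
the number of `b` with `cΔ_f(1, b) = i`. -/
def omegaSpec {F : Type*} [Field F] [Fintype F] [DecidableEq F]
    (f : F → F) (c : F) (i : ℕ) : ℕ :=
  (Finset.univ.filter (fun b : F => cDDT f c 1 b = i)).card

/-- The boomerang spectrum entry `v_i` of a power function:
the number of nonzero `b` with `B_f(1, b) = i`. -/
def vSpec {F : Type*} [Field F] [Fintype F] [DecidableEq F]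
    (f : F → F) (i : ℕ) : ℕ :=
  (Finset.univ.filter (fun b : F => b ≠ 0 ∧ BCT f 1 b = i)).card

theorem Finset.eq_or_eq_or_eq_of_card_le_two {α : Type*} {s : Finset α} (hs : #s ≤ 2)
    {x y z : α} (hx : x ∈ s) (hy : y ∈ s) (hz : z ∈ s) : x = y ∨ x = z ∨ y = z := by
  by_contra! h
  exact (two_lt_card_iff.mpr ⟨x, y, z, hx, hy, hz, h.1, h.2.1, h.2.2⟩).not_ge hs

-- In characteristic 2 the map `x ↦ -x - a` has no fixed point at all, since `a ≠ 0`.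
theorem eq_of_neg_sub_eq_self {R : Type*} [CommRing R] [NoZeroDivisors R] {a x y : R}
    (ha : a ≠ 0) (hx : -x - a = x) (hy : -y - a = y) : x = y := by
  have h : (2 : R) * (x - y) = 0 := by linear_combination hy - hx
  rcases mul_eq_zero.mp h with h2 | hxy
  · exact absurd (by linear_combination -hx - x * h2) ha
  · exact sub_eq_zero.mp hxy

theorem sub_apply_neg_sub_of_odd {G : Type*} [AddCommGroup G] {f : G → G}
    (hfodd : ∀ x, f (-x) = -f x) (a x : G) :
    f (-x - a + a) - f (-x - a) = f (x + a) - f x := by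
  rw [sub_add_cancel, ← neg_add', hfodd, hfodd, neg_sub_neg]

section FiniteField

variable {F : Type*} [Field F] [Fintype F] [DecidableEq F] {f : F → F}

theorem cDDT_one_le_DU {a : F} (ha : a ≠ 0) (b : F) : cDDT f 1 a b ≤ DU f := by
  unfold DU cDU
  exact le_sup (f := fun ab : F × F => cDDT f 1 ab.1 ab.2)
    (mem_filter.mpr ⟨mem_univ (a, b), fun _ => ha⟩)

theorem cDDT_neg_one_eq (a b : F) : cDDT f (-1) a b = #{x | f (x + a) + f x = b} := by
  simp only [cDDT, neg_one_mul, sub_neg_eq_add]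

theorem cDDT_neg_one_neg (hfodd : ∀ x, f (-x) = -f x) (a b : F) :
    cDDT f (-1) a (-b) = cDDT f (-1) a b := by
  have reflect : ∀ x c : F, f (x + a) + f x = c → f (-x - a + a) + f (-x - a) = -c := by
    intro x c h
    rw [sub_add_cancel, ← neg_add', hfodd, hfodd]
    linear_combination -h
  simp only [cDDT_neg_one_eq]
  refine card_nbij' (fun x => -x - a) (fun x => -x - a) ?_ ?_ ?_ ?_
  · intro x hx
    exact mem_filter.mpr ⟨mem_univ _, neg_neg b ▸ reflect x _ (mem_filter.mp hx).2⟩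
  · intro x hx
    exact mem_filter.mpr ⟨mem_univ _, reflect x _ (mem_filter.mp hx).2⟩
  all_goals intro x _; ring

theorem eq_or_eq_neg_sub_of_sub_apply_eq (hfodd : ∀ x, f (-x) = -f x) (hAPN : DU f ≤ 2)
    {a : F} (ha : a ≠ 0) {x y : F} (h : f (y + a) - f y = f (x + a) - f x) :
    y = x ∨ y = -x - a := by
  set T : Finset F := {z | f (z + a) - f z = f (x + a) - f x}
  have hT : #T ≤ 2 := by
    simpa [cDDT, T] using (cDDT_one_le_DU (f := f) ha (f (x + a) - f x)).trans hAPN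
  have mem_T : ∀ z, f (z + a) - f z = f (x + a) - f x → z ∈ T ∧ -z - a ∈ T := fun z hz =>
    ⟨mem_filter.mpr ⟨mem_univ _, hz⟩,
      mem_filter.mpr ⟨mem_univ _, (sub_apply_neg_sub_of_odd hfodd a z).trans hz⟩⟩
  obtain ⟨hxT, hσxT⟩ := mem_T x rfl
  obtain ⟨hyT, hσyT⟩ := mem_T y h
  -- pigeonhole on `x, -x - a, y` and on `y, -y - a, x` inside the fibre `T`
  rcases eq_or_eq_or_eq_of_card_le_two hT hxT hσxT hyT with hx | rfl | rfl
  · rcases eq_or_eq_or_eq_of_card_le_two hT hyT hσyT hxT with hy | rfl | hyx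
    · exact .inl (eq_of_neg_sub_eq_self ha hy.symm hx.symm)
    · exact .inl rfl
    · exact .inr (by linear_combination -hyx)
  · exact .inl rfl
  · exact .inr rfl

theorem boomerang_pair_iff (hfodd : ∀ x, f (-x) = -f x) (hAPN : DU f ≤ 2)
    {a b : F} (ha : a ≠ 0) (hb : b ≠ 0) (x y : F) :
    (f x - f y = b ∧ f (x + a) - f (y + a) = b) ↔ y = -x - a ∧ f (x + a) + f x = b := by
  have hσ : f (-x - a) = -f (x + a) := by rw [← neg_add', hfodd]
  constructor
  · rintro ⟨h₁, h₂⟩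
    rcases eq_or_eq_neg_sub_of_sub_apply_eq hfodd hAPN ha
      (by linear_combination h₁ - h₂ : f (y + a) - f y = f (x + a) - f x) with rfl | rfl
    · exact absurd (by simpa using h₁.symm) hb
    · exact ⟨rfl, by linear_combination h₁ + hσ⟩
  · rintro ⟨rfl, h⟩
    rw [sub_add_cancel, hfodd, hσ]
    exact ⟨by linear_combination h, by linear_combination h⟩

theorem BCT_eq_cDDT_neg_one (hfodd : ∀ x, f (-x) = -f x) (hAPN : DU f ≤ 2)
    {a b : F} (ha : a ≠ 0) (hb : b ≠ 0) : BCT f a b = cDDT f (-1) a b := by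
  have hpairs : ({xy | f xy.1 - f xy.2 = b ∧ f (xy.1 + a) - f (xy.2 + a) = b} : Finset (F × F)) =
      ({x | f (x + a) + f x = b} : Finset F).map
        ⟨fun x => (x, -x - a), fun _ _ h => congrArg Prod.fst h⟩ := by
    ext ⟨x, y⟩
    simp only [mem_filter, mem_univ, true_and, mem_map, boomerang_pair_iff hfodd hAPN ha hb]
    constructor
    · rintro ⟨rfl, h⟩
      exact ⟨x, h, rfl⟩
    · rintro ⟨x, h, ⟨⟩⟩
      exact ⟨rfl, h⟩
  rw [BCT, hpairs, card_map, cDDT_neg_one_eq]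

end FiniteField

theorem bct_eq_neg_one_ddt_general
    {F : Type*} [Field F] [Fintype F] [DecidableEq F]
    (f : F → F) (hfodd : ∀ x : F, f (-x) = -f x) (hAPN : DU f ≤ 2) :
    ∀ a b : F, a ≠ 0 → b ≠ 0 → BCT f a b = cDDT f (-1) a (-b) := by
  intro a b ha hb
  rw [BCT_eq_cDDT_neg_one hfodd hAPN ha hb, cDDT_neg_one_neg hfodd]

theorem bct_eq_neg_one_ddt (p n : ℕ) (hp : p.Prime) (hpodd : Odd p) (hn : 1 ≤ n)
    {F : Type*} [Field F] [Fintype F] [DecidableEq F]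
    (hF : Fintype.card F = p ^ n)
    (f : F → F) (hfodd : ∀ x : F, f (-x) = -f x) (hAPN : DU f ≤ 2) :
    ∀ a b : F, a ≠ 0 → b ≠ 0 → BCT f a b = cDDT f (-1) a (-b) :=
  bct_eq_neg_one_ddt_general f hfodd hAPN
end

section
/- Let p be an odd prime, n ≥ 1, and let f(X) = X^d be an odd APN power function on F_{p^n} with boomerang uniformity B_f and boomerang spectrum entries v_i. Then Σ_{i=0}^{B_f} v_i = p^n − 1 and Σ_{i=0}^{B_f} i·v_i = p^n − ₋₁Δ_f(1,0). -/
/-! Summing `B_f(1, b)` over `b ≠ 0` counts the pairs `(x, y)` with `D x = D y` and `f x ≠ f y`,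
where `D x = f (x + 1) - f x`. Oddness of `f` gives `D (-1 - x) = D x`, and since `f` is APN the
fibres of `D` have at most two points, so `D x = D y` forces `y ∈ {x, -1 - x}`. Hence the pairs are
the `(x, -1 - x)` with `f (x + 1) + f x ≠ 0`, and there are `p ^ n - ₋₁Δ_f(1, 0)` of them. -/

open Finset

theorem eq_or_eq_of_apply_eq_of_card_fiber_le_two {α β : Type*} [Fintype α] [DecidableEq α]
    [DecidableEq β] {g : α → β} {σ : α → α} (hσ : Function.Involutive σ)
    (hfix : ∀ x y, σ x = x → σ y = y → x = y) (hgσ : ∀ x, g (σ x) = g x)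
    (hfib : ∀ b, #{x | g x = b} ≤ 2) {x y : α} (h : g x = g y) : y = x ∨ y = σ x := by
  by_contra! hne
  obtain ⟨hyx, hyσx⟩ := hne
  -- `σ` fixes at most one of `x`, `y`, and the hypotheses are symmetric in them
  wlog hx : σ x ≠ x generalizing x y
  · have hy : σ y ≠ y := fun hy => hyx (hfix y x hy (not_not.1 hx))
    exact this h.symm hyx.symm (fun hxσy => hyσx (by rw [hxσy, hσ])) hy
  have hsub : ({x, σ x, y} : Finset α) ⊆ ({z | g z = g x} : Finset α) := by
    intro z hz
    simp only [mem_insert, mem_singleton] at hz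
    rcases hz with rfl | rfl | rfl <;> simp [hgσ, h]
  have hcard : #({x, σ x, y} : Finset α) = 3 :=
    card_eq_three.2 ⟨x, σ x, y, hx.symm, hyx.symm, hyσx.symm, rfl⟩
  have := (card_le_card hsub).trans (hfib (g x))
  omega

theorem eq_of_neg_one_sub_eq_self {R : Type*} [CommRing R] {x y : R}
    (hx : -1 - x = x) (hy : -1 - y = y) : x = y := by
  linear_combination y * hx - x * hy

theorem sub_apply_neg_one_sub_of_odd {R : Type*} [Ring R] {f : R → R}
    (hodd : ∀ x, f (-x) = -f x) (x : R) :
    f (-1 - x + 1) - f (-1 - x) = f (x + 1) - f x := by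
  rw [show -1 - x + 1 = -x by abel, show -1 - x = -(x + 1) by abel, hodd, hodd]
  abel

section FiniteField

variable {F : Type*} [Field F] [Fintype F] [DecidableEq F]

theorem cDDT_le_cDU (f : F → F) {c a b : F} (ha : c = 1 → a ≠ 0) :
    cDDT f c a b ≤ cDU f c :=
  Finset.le_sup (f := fun ab : F × F => cDDT f c ab.1 ab.2) (mem_filter.2 ⟨mem_univ (a, b), ha⟩)

theorem BCT_le_BU (f : F → F) {a b : F} (ha : a ≠ 0) (hb : b ≠ 0) : BCT f a b ≤ BU f :=
  Finset.le_sup (f := fun ab : F × F => BCT f ab.1 ab.2) (mem_filter.2 ⟨mem_univ (a, b), ha, hb⟩)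

theorem card_sub_apply_add_one_eq_le_DU (f : F → F) (b : F) :
    #{x | f (x + 1) - f x = b} ≤ DU f := by
  rw [DU]
  simpa [cDDT] using cDDT_le_cDU f (c := 1) (a := 1) (b := b) fun _ => one_ne_zero

theorem sub_apply_add_one_eq_iff {f : F → F} (hodd : ∀ x, f (-x) = -f x) (hAPN : DU f ≤ 2)
    {x y : F} : f (x + 1) - f x = f (y + 1) - f y ↔ y = x ∨ y = -1 - x := by
  constructor
  · exact eq_or_eq_of_apply_eq_of_card_fiber_le_two (σ := fun x => -1 - x)
      (fun x => by ring) (fun _ _ => eq_of_neg_one_sub_eq_self)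
      (sub_apply_neg_one_sub_of_odd hodd)
      (fun b => (card_sub_apply_add_one_eq_le_DU f b).trans hAPN)
  · rintro (rfl | rfl)
    · rfl
    · exact (sub_apply_neg_one_sub_of_odd hodd x).symm

theorem sum_BCT_ne_zero (f : F → F) (a : F) :
    ∑ b ∈ {b | b ≠ 0}, BCT f a b =
      #{xy : F × F | f (xy.1 + a) - f (xy.2 + a) = f xy.1 - f xy.2 ∧ f xy.1 ≠ f xy.2} := by
  rw [card_eq_sum_card_fiberwise (f := fun xy : F × F => f xy.1 - f xy.2) (t := {b | b ≠ 0})]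
  · refine sum_congr rfl fun b hb => ?_
    rw [BCT, filter_filter]
    refine congrArg card (filter_congr fun xy _ => ?_)
    rw [mem_filter] at hb
    constructor
    · rintro ⟨h1, h2⟩
      exact ⟨⟨h2.trans h1.symm, sub_ne_zero.1 (h1 ▸ hb.2)⟩, h1⟩
    · rintro ⟨⟨h1, -⟩, h2⟩
      exact ⟨h2, h1.trans h2⟩
  · intro xy hxy
    simpa [sub_eq_zero] using (mem_filter.1 hxy).2.2

theorem sub_apply_add_one_eq_sub_and_ne_iff {f : F → F} (hodd : ∀ x, f (-x) = -f x) (hAPN : DU f ≤ 2) (x y : F) :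
    (f (x + 1) - f (y + 1) = f x - f y ∧ f x ≠ f y) ↔
      y = -1 - x ∧ f (x + 1) - -1 * f x ≠ 0 := by
  have hderiv : f (x + 1) - f (y + 1) = f x - f y ↔ f (x + 1) - f x = f (y + 1) - f y := by
    constructor <;> intro h <;> linear_combination h
  rw [hderiv, sub_apply_add_one_eq_iff hodd hAPN]
  have hneg : f (-1 - x) = -f (x + 1) := by rw [show -1 - x = -(x + 1) by ring, hodd]
  constructor
  · rintro ⟨rfl | rfl, hne⟩
    · exact absurd rfl hne
    · refine ⟨rfl, fun h => hne ?_⟩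
      rw [hneg]
      linear_combination h
  · rintro ⟨rfl, hne⟩
    refine ⟨Or.inr rfl, fun h => hne ?_⟩
    rw [hneg] at h
    linear_combination h

theorem sum_BCT_one_ne_zero {f : F → F} (hodd : ∀ x, f (-x) = -f x) (hAPN : DU f ≤ 2) :
    ∑ b ∈ {b | b ≠ 0}, BCT f 1 b = Fintype.card F - cDDT f (-1) 1 0 := by
  have hpairs : #{xy : F × F | f (xy.1 + 1) - f (xy.2 + 1) = f xy.1 - f xy.2 ∧ f xy.1 ≠ f xy.2}
      = #{x | ¬f (x + 1) - -1 * f x = 0} := by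
    apply card_nbij' Prod.fst (fun x => (x, -1 - x))
    · intro xy hxy
      simpa using ((sub_apply_add_one_eq_sub_and_ne_iff hodd hAPN xy.1 xy.2).1 (mem_filter.1 hxy).2).2
    · intro x hx
      simpa [sub_apply_add_one_eq_sub_and_ne_iff hodd hAPN] using hx
    · intro xy hxy
      exact Prod.ext rfl ((sub_apply_add_one_eq_sub_and_ne_iff hodd hAPN xy.1 xy.2).1 (mem_filter.1 hxy).2).1.symm
    · intro x _
      rfl
  have hsplit := card_filter_add_card_filter_not (s := univ) fun x : F => f (x + 1) - -1 * f x = 0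
  rw [card_univ] at hsplit
  rw [sum_BCT_ne_zero, hpairs, cDDT]
  omega

theorem mapsTo_BCT_one_range (f : F → F) :
    Set.MapsTo (BCT f 1) ({b | b ≠ 0} : Finset F) (range (BU f + 1)) := fun _ hb =>
  mem_range.2 (Nat.lt_succ_of_le (BCT_le_BU f one_ne_zero (mem_filter.1 hb).2))

theorem vSpec_eq_card_filter (f : F → F) (i : ℕ) :
    vSpec f i = #{b ∈ {b | b ≠ 0} | BCT f 1 b = i} := by
  rw [vSpec, filter_filter]

theorem sum_range_vSpec (f : F → F) :
    ∑ i ∈ range (BU f + 1), vSpec f i = Fintype.card F - 1 := by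
  simp_rw [vSpec_eq_card_filter]
  rw [← card_eq_sum_card_fiberwise (mapsTo_BCT_one_range f), filter_ne',
    card_erase_of_mem (mem_univ _), card_univ]

theorem sum_range_mul_vSpec (f : F → F) :
    ∑ i ∈ range (BU f + 1), i * vSpec f i = ∑ b ∈ {b | b ≠ 0}, BCT f 1 b := by
  rw [← sum_fiberwise_of_maps_to (mapsTo_BCT_one_range f)]
  refine sum_congr rfl fun i _ => ?_
  rw [vSpec_eq_card_filter, sum_const_nat fun b hb => (mem_filter.1 hb).2, mul_comm]

end FiniteField

theorem boomerang_spectrum_identities_general (p n : ℕ)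
    {F : Type*} [Field F] [Fintype F] [DecidableEq F]
    (hF : Fintype.card F = p ^ n)
    (f : F → F)
    (hfodd : ∀ x : F, f (-x) = -f x) (hAPN : DU f ≤ 2) :
    (∑ i ∈ Finset.range (BU f + 1), vSpec f i) = p ^ n - 1 ∧
    (∑ i ∈ Finset.range (BU f + 1), i * vSpec f i) = p ^ n - cDDT f (-1) 1 0 := by
  rw [sum_range_vSpec, sum_range_mul_vSpec, sum_BCT_one_ne_zero hfodd hAPN, hF]
  exact ⟨rfl, rfl⟩

theorem boomerang_spectrum_identities (p n : ℕ) (hp : p.Prime) (hpodd : Odd p) (hn : 1 ≤ n)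
    {F : Type*} [Field F] [Fintype F] [DecidableEq F]
    (hF : Fintype.card F = p ^ n)
    (d : ℕ) (f : F → F) (hfd : ∀ x : F, f x = x ^ d)
    (hfodd : ∀ x : F, f (-x) = -f x) (hAPN : DU f ≤ 2) :
    (∑ i ∈ Finset.range (BU f + 1), vSpec f i) = p ^ n - 1 ∧
    (∑ i ∈ Finset.range (BU f + 1), i * vSpec f i) = p ^ n - cDDT f (-1) 1 0 :=
  boomerang_spectrum_identities_general p n hF f hfodd hAPN
end

section
/- Let p be an odd prime, n ≥ 1, f(X) = X^{p^n−2} on F_{p^n}, and let c ∈ F_{p^n} \ {0,1} be such that χ(c²−4c) = 1 or χ(1−4c) = 1. Then the c-differential uniformity of f is cΔ_f = 3. -/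
open Finset

/-! Off `x ∈ {0, -a}`, the equation `(x + a)⁻¹ - c * x⁻¹ = b` is equivalent to
`b x² + (a b + c - 1) x + c a = 0`, a nonzero polynomial of degree at most `2` since `c ≠ 1`;
and `0`, `-a` cannot both be solutions, as that forces `a⁻¹ = b = c a⁻¹`. Hence every entry of
the `c`-DDT of the inverse function is at most `3`. For `a = 1` and `b = 1` (resp. `b = c`) the
discriminant of the quadratic is `c² - 4c` (resp. `1 - 4c`); when it is a nonzero square, its two
roots together with `x = 0` (resp. `x = -1`) are three solutions. -/
open Polynomial

lemma FiniteField.pow_card_sub_two_eq_inv {K : Type*} [Field K] [Fintype K]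
    (hq : 2 < Fintype.card K) (x : K) : x ^ (Fintype.card K - 2) = x⁻¹ := by
  rcases eq_or_ne x 0 with rfl | hx
  · rw [zero_pow (by omega), inv_zero]
  · refine eq_inv_of_mul_eq_one_left ?_
    rw [← pow_succ, show Fintype.card K - 2 + 1 = Fintype.card K - 1 by omega]
    exact FiniteField.pow_card_sub_one_eq_one x hx

lemma chi_eq_one_iff {K : Type*} [Field K] {α : K} : chi α = 1 ↔ α ≠ 0 ∧ IsSquare α := by
  unfold chi
  split_ifs <;> simp_all

section Quadratic

variable {K : Type*} [Field K] {a b c : K}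

lemma exists_ne_quadratic_eq_zero [NeZero (2 : K)] (ha : a ≠ 0) (hd : discrim a b c ≠ 0)
    (hsq : IsSquare (discrim a b c)) :
    ∃ x y, x ≠ y ∧ a * (x * x) + b * x + c = 0 ∧ a * (y * y) + b * y + c = 0 := by
  obtain ⟨s, hs⟩ := hsq
  have hs0 : s ≠ 0 := by rintro rfl; simp_all
  refine ⟨(-b + s) / (2 * a), (-b - s) / (2 * a), fun h => hs0 ?_,
    (quadratic_eq_zero_iff ha hs _).2 (.inl rfl), (quadratic_eq_zero_iff ha hs _).2 (.inr rfl)⟩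
  have h2 : (2 : K) ≠ 0 := NeZero.ne 2
  field_simp at h
  exact (mul_eq_zero.1 (by linear_combination h : (2 : K) * s = 0)).resolve_left h2

lemma card_filter_quadratic_eq_zero_le_two [Fintype K] [DecidableEq K] (h : a ≠ 0 ∨ b ≠ 0) :
    #{x | a * (x * x) + b * x + c = 0} ≤ 2 := by
  set P : K[X] := C a * X ^ 2 + C b * X + C c
  have hP : P ≠ 0 := by
    intro hP
    rcases h with h | h
    · exact h (by simpa [P] using congr_arg (coeff · 2) hP)
    · exact h (by simpa [P] using congr_arg (coeff · 1) hP)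
  calc _ ≤ P.natDegree := card_le_degree_of_subset_roots fun x hx => by
        rw [mem_roots hP]
        simp only [Finset.filter_val, Multiset.mem_filter] at hx
        simp only [P, IsRoot.def, eval_add, eval_mul, eval_C, eval_pow, eval_X]
        linear_combination hx.2
    _ ≤ 2 := natDegree_quadratic_le

end Quadratic

section Inverse

variable {F : Type*} [Field F] {a b c : F}

lemma inv_add_sub_mul_inv_eq_iff {x : F} (hx : x ≠ 0) (hxa : x + a ≠ 0) :
    (x + a)⁻¹ - c * x⁻¹ = b ↔ b * (x * x) + (a * b + c - 1) * x + c * a = 0 := by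
  have key : ((x + a)⁻¹ - c * x⁻¹) * ((x + a) * x) = x - c * (x + a) := by field_simp
  rw [← mul_left_inj' (mul_ne_zero hxa hx), key]
  constructor <;> intro h <;> linear_combination -h

variable [Fintype F] [DecidableEq F]

lemma cDDT_inv_le_three (hc : c ≠ 1) (a b : F) : cDDT (·⁻¹) c a b ≤ 3 := by
  set S : Finset F := {x | (x + a)⁻¹ - c * x⁻¹ = b}
  have hS : S ⊆
      ({x | b * (x * x) + (a * b + c - 1) * x + c * a = 0} : Finset F) ∪ (S ∩ {0, -a}) := by
    intro x hx
    by_cases hx' : x ∈ ({0, -a} : Finset F)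
    · exact mem_union_right _ (mem_inter.2 ⟨hx, hx'⟩)
    · simp only [mem_insert, mem_singleton, not_or] at hx'
      refine mem_union_left _ (mem_filter.2 ⟨mem_univ _, ?_⟩)
      exact (inv_add_sub_mul_inv_eq_iff hx'.1 fun h => hx'.2 (eq_neg_of_add_eq_zero_left h)).1
        (mem_filter.1 hx).2
  have hquad : #{x | b * (x * x) + (a * b + c - 1) * x + c * a = 0} ≤ 2 := by
    refine card_filter_quadratic_eq_zero_le_two ?_
    rcases eq_or_ne b 0 with rfl | hb
    · exact .inr (by simpa [sub_eq_zero] using hc)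
    · exact .inl hb
  have hends : #(S ∩ {0, -a}) ≤ 1 := by
    have hboth : 0 ∈ S → -a ∈ S → a = 0 := by
      simp only [S, mem_filter, mem_univ, true_and, zero_add, inv_zero, mul_zero, sub_zero,
        neg_add_cancel, inv_neg, mul_neg, zero_sub, neg_neg]
      intro h0 ha
      have : (1 - c) * a⁻¹ = 0 := by linear_combination h0 - ha
      simpa [sub_eq_zero, Ne.symm hc] using this
    rw [card_le_one]
    simp only [mem_inter, mem_insert, mem_singleton]
    rintro x ⟨hx, rfl | rfl⟩ y ⟨hy, rfl | rfl⟩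
    · rfl
    · simp [hboth hx hy]
    · simp [hboth hy hx]
    · rfl
  calc #S ≤ _ := card_le_card hS
    _ ≤ _ := card_union_le _ _
    _ ≤ 3 := by omega

lemma three_le_cDDT_inv [NeZero (2 : F)] (ha : a ≠ 0) (hb : b ≠ 0) (hc : c ≠ 0)
    (hd : chi (discrim b (a * b + c - 1) (c * a)) = 1) {x₀ : F} (hx₀ : x₀ * (x₀ + a) = 0)
    (hx₀b : (x₀ + a)⁻¹ - c * x₀⁻¹ = b) : 3 ≤ cDDT (·⁻¹) c a b := by
  obtain ⟨hd0, hsq⟩ := chi_eq_one_iff.1 hd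
  obtain ⟨x, y, hxy, hx, hy⟩ := exists_ne_quadratic_eq_zero hb hd0 hsq
  -- the quadratic takes the values `c * a ≠ 0` at `0` and `a ≠ 0` at `-a`
  have hroot : ∀ {r : F}, b * (r * r) + (a * b + c - 1) * r + c * a = 0 →
      r * (r + a) ≠ 0 ∧ (r + a)⁻¹ - c * r⁻¹ = b := by
    intro r hr
    have hr0 : r ≠ 0 := by rintro rfl; exact mul_ne_zero hc ha (by simpa using hr)
    have hra : r + a ≠ 0 := fun h => ha (by
      rw [eq_neg_of_add_eq_zero_left h] at hr; linear_combination hr)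
    exact ⟨mul_ne_zero hr0 hra, (inv_add_sub_mul_inv_eq_iff hr0 hra).2 hr⟩
  have hsub : ({x₀, x, y} : Finset F) ⊆ ({x | (x + a)⁻¹ - c * x⁻¹ = b} : Finset F) := by
    intro z hz
    simp only [mem_insert, mem_singleton] at hz
    rcases hz with rfl | rfl | rfl
    exacts [mem_filter.2 ⟨mem_univ _, hx₀b⟩, mem_filter.2 ⟨mem_univ _, (hroot hx).2⟩,
      mem_filter.2 ⟨mem_univ _, (hroot hy).2⟩]
  have hcard : #({x₀, x, y} : Finset F) = 3 := by
    have hx₀x : x₀ ≠ x := fun h => (hroot hx).1 (h ▸ hx₀)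
    have hx₀y : x₀ ≠ y := fun h => (hroot hy).1 (h ▸ hx₀)
    rw [card_insert_of_notMem (by simp [hx₀x, hx₀y]), card_pair hxy]
  exact hcard ▸ card_le_card hsub

lemma cDU_inv_eq_three [NeZero (2 : F)] (hc0 : c ≠ 0) (hc1 : c ≠ 1)
    (hchi : chi (c ^ 2 - 4 * c) = 1 ∨ chi (1 - 4 * c) = 1) : cDU (·⁻¹) c = 3 := by
  refine le_antisymm (Finset.sup_le fun ab _ => cDDT_inv_le_three hc1 ab.1 ab.2) ?_
  have hle : ∀ b, cDDT (·⁻¹) c 1 b ≤ cDU (·⁻¹) c := fun b =>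
    Finset.le_sup (f := fun ab : F × F => cDDT (·⁻¹) c ab.1 ab.2)
      (mem_filter.2 ⟨mem_univ (1, b), fun _ => one_ne_zero⟩)
  rcases hchi with h | h
  · refine (three_le_cDDT_inv one_ne_zero one_ne_zero hc0 ?_ (x₀ := 0) (by simp) (by simp)).trans
      (hle 1)
    rwa [discrim, show (1 * 1 + c - 1) ^ 2 - 4 * 1 * (c * 1) = c ^ 2 - 4 * c by ring]
  · refine (three_le_cDDT_inv one_ne_zero hc0 hc0 ?_ (x₀ := -1) (by simp) (by simp)).trans
      (hle c)
    rwa [discrim, show (1 * c + c - 1) ^ 2 - 4 * c * (c * 1) = 1 - 4 * c by ring]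

end Inverse

theorem cdu_inverse_eq_three_general (p n : ℕ) (hpodd : Odd p)
    {F : Type*} [Field F] [Fintype F] [DecidableEq F]
    (hF : Fintype.card F = p ^ n)
    (c : F) (hc0 : c ≠ 0) (hc1 : c ≠ 1)
    (hchi : chi (c ^ 2 - 4 * c) = 1 ∨ chi (1 - 4 * c) = 1) :
    cDU (fun x : F => x ^ (p ^ n - 2)) c = 3 := by
  have hodd : Fintype.card F % 2 = 1 := Nat.odd_iff.1 (hF ▸ hpodd.pow)
  have : NeZero (2 : F) :=
    ⟨Ring.two_ne_zero fun h => by have := FiniteField.even_card_iff_char_two.1 h; omega⟩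
  have hq : 2 < Fintype.card F := by have := Fintype.one_lt_card (α := F); omega
  have hinv : (fun x : F => x ^ (p ^ n - 2)) = (·⁻¹) :=
    funext fun x => hF ▸ FiniteField.pow_card_sub_two_eq_inv hq x
  rw [hinv]
  exact cDU_inv_eq_three hc0 hc1 hchi

theorem cdu_inverse_eq_three (p n : ℕ) (hp : p.Prime) (hpodd : Odd p) (hn : 1 ≤ n)
    {F : Type*} [Field F] [Fintype F] [DecidableEq F]
    (hF : Fintype.card F = p ^ n)
    (c : F) (hc0 : c ≠ 0) (hc1 : c ≠ 1)
    (hchi : chi (c ^ 2 - 4 * c) = 1 ∨ chi (1 - 4 * c) = 1) :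
    cDU (fun x : F => x ^ (p ^ n - 2)) c = 3 :=
  cdu_inverse_eq_three_general p n hpodd hF c hc0 hc1 hchi
end

section
/- Let p be an odd prime, n = 2m an even positive integer with p^m ≡ 1 (mod 3), and let f₄(X) = X^{p^m+2} on F_{p^n}. Then the boomerang uniformity of f₄ satisfies B_{f₄} ≤ 5. -/
/-!
Write `x ^ (q + 2) = σ x * x ^ 2`, where `σ z = z ^ q` is the involutive Frobenius of
`F_{q²}`; since `q ≡ 1 (mod 3)`, `σ` fixes the cube roots of unity. Subtracting the two
equations of a BCT entry gives an equation that is linear in `s = x + y + a` and `σ s`;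
together with its conjugate it forces `s = 0`, unless `θ ^ 2 + θ σθ + σθ ^ 2 = 0` for
`θ = σ a (x - y) ≠ 0`, which would make `θ / σθ` a cube root of unity `ρ ≠ 1` with `σ ρ = ρ⁻¹`.
So `y = -x - a`, and eliminating `σ (x - y)` between the remaining equation and its conjugate
shows that `x - y` is a root of a nonzero quintic; as `(x, y)` is determined by `x - y`, every
entry is at most `5`.
-/

open Finset

open Polynomial

section Involution

variable {F : Type*} [Field F] {σ : F →+* F}

lemma sq_add_mul_add_sq_ne_zero (hσ : Function.Involutive σ)
    (hcube : ∀ ρ : F, ρ ^ 3 = 1 → σ ρ = ρ) (h3 : (3 : F) ≠ 0) {θ : F} (hθ : θ ≠ 0) :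
    θ ^ 2 + θ * σ θ + σ θ ^ 2 ≠ 0 := by
  intro h
  set η := σ θ with hη_def
  have hη : η ≠ 0 := (map_ne_zero σ).2 hθ
  -- `θ / η` would be a cube root of unity inverted by `σ`, hence `θ ^ 2 = η ^ 2`
  have hρ : (θ / η) ^ 3 = 1 := by
    rw [div_pow, div_eq_one_iff_eq (pow_ne_zero 3 hη)]
    linear_combination (θ - η) * h
  have hsq : θ ^ 2 = η ^ 2 := by
    have hfix := hcube _ hρ
    rw [map_div₀, ← hη_def, hσ θ, div_eq_div_iff hθ hη] at hfix
    linear_combination -hfix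
  have h3η : (3 : F) * η ^ 4 = 0 := by
    linear_combination η ^ 2 * hsq - (θ * η - 2 * η ^ 2) * (h - hsq)
  exact mul_ne_zero h3 (pow_ne_zero 4 hη) h3η

lemma eq_zero_of_add_mul_add_mul_eq_zero (hσ : Function.Involutive σ)
    (hcube : ∀ ρ : F, ρ ^ 3 = 1 → σ ρ = ρ) (h3 : (3 : F) ≠ 0) {θ B s : F} (hθ : θ ≠ 0)
    (hB : B * σ B = θ * σ θ) (h : (θ + σ θ) * s + B * σ s = 0) : s = 0 := by
  have h' : (θ + σ θ) * σ s + σ B * s = 0 := by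
    have := congrArg σ h
    simp only [map_add, map_mul, map_zero, hσ θ, hσ s] at this
    linear_combination this
  -- the determinant of the linear system `h`, `h'` in `s`, `σ s`
  have hdet : (θ ^ 2 + θ * σ θ + σ θ ^ 2) * s = 0 := by
    linear_combination (θ + σ θ) * h - B * h' + s * hB
  exact (mul_eq_zero.1 hdet).resolve_left (sq_add_mul_add_sq_ne_zero hσ hcube h3 hθ)

lemma add_add_eq_zero_of_sub_eq_sub (hσ : Function.Involutive σ)
    (hcube : ∀ ρ : F, ρ ^ 3 = 1 → σ ρ = ρ) (h3 : (3 : F) ≠ 0) {a x y : F} (ha : a ≠ 0)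
    (hxy : x ≠ y)
    (h : σ (x + a) * (x + a) ^ 2 - σ (y + a) * (y + a) ^ 2 = σ x * x ^ 2 - σ y * y ^ 2) :
    x + y + a = 0 := by
  refine eq_zero_of_add_mul_add_mul_eq_zero hσ hcube h3 (θ := σ a * (x - y)) (B := a * (x - y))
    (mul_ne_zero ((map_ne_zero σ).2 ha) (sub_ne_zero.2 hxy)) ?_ ?_
  · simp only [map_mul, hσ a]
    ring
  · simp only [map_add, map_mul, map_sub, hσ a] at h ⊢
    linear_combination h

/-- With `u = x - y = 2 * x + a` and `U = σ u`, a solution with `y = -x - a` satisfies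
`U * (u ^ 2 + a ^ 2) + 2 * a * σ a * u = 4 * b` and its conjugate; eliminating `U` gives this. -/
noncomputable def boomerangQuintic (σ : F →+* F) (a b : F) : F[X] :=
  C (σ a ^ 2) * X ^ 5 - C (4 * σ b) * X ^ 4 + C (2 * a ^ 2 * σ a ^ 2) * X ^ 3
    - C (8 * a * σ a * b + 8 * a ^ 2 * σ b) * X ^ 2 + C (16 * b ^ 2 - 3 * a ^ 4 * σ a ^ 2) * X
    + C (8 * a ^ 3 * σ a * b - 4 * a ^ 4 * σ b)

lemma natDegree_boomerangQuintic {a : F} (ha : a ≠ 0) (b : F) :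
    (boomerangQuintic σ a b).natDegree = 5 := by
  unfold boomerangQuintic
  compute_degree!

lemma eval_boomerangQuintic_eq_zero (hσ : Function.Involutive σ) {a b x : F}
    (h : σ x * x ^ 2 - σ (-x - a) * (-x - a) ^ 2 = b) :
    (boomerangQuintic σ a b).eval (2 * x + a) = 0 := by
  set u := 2 * x + a
  set U := 2 * σ x + σ a
  have hU : U * (u ^ 2 + a ^ 2) + 2 * a * σ a * u = 4 * b := by
    simp only [map_sub, map_neg] at h
    linear_combination 4 * h
  have hU' : u * (U ^ 2 + σ a ^ 2) + 2 * a * σ a * U = 4 * σ b := by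
    have := congrArg σ h
    simp only [map_sub, map_neg, map_mul, map_pow, hσ x, hσ a] at this
    linear_combination 4 * this
  simp only [boomerangQuintic, eval_add, eval_sub, eval_mul, eval_pow, eval_C, eval_X]
  linear_combination (-(u * (4 * b - 2 * a * σ a * u + U * (u ^ 2 + a ^ 2))
    + 2 * a * σ a * (u ^ 2 + a ^ 2))) * hU + (u ^ 2 + a ^ 2) ^ 2 * hU'

lemma eq_neg_sub_and_eval_boomerangQuintic_eq_zero (hσ : Function.Involutive σ)
    (hcube : ∀ ρ : F, ρ ^ 3 = 1 → σ ρ = ρ) (h3 : (3 : F) ≠ 0) {a b x y : F} (ha : a ≠ 0)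
    (hb : b ≠ 0) (h₁ : σ x * x ^ 2 - σ y * y ^ 2 = b)
    (h₂ : σ (x + a) * (x + a) ^ 2 - σ (y + a) * (y + a) ^ 2 = b) :
    y = -x - a ∧ (boomerangQuintic σ a b).eval (x - y) = 0 := by
  have hxy : x ≠ y := by
    rintro rfl
    rw [sub_self] at h₁
    exact hb h₁.symm
  have hy : y = -x - a := by
    linear_combination add_add_eq_zero_of_sub_eq_sub hσ hcube h3 ha hxy (h₂.trans h₁.symm)
  subst hy
  refine ⟨rfl, ?_⟩
  rw [show x - (-x - a) = 2 * x + a by ring]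
  exact eval_boomerangQuintic_eq_zero hσ h₁

theorem BCT_le_five [Fintype F] [DecidableEq F] (hσ : Function.Involutive σ)
    (hcube : ∀ ρ : F, ρ ^ 3 = 1 → σ ρ = ρ) (h2 : (2 : F) ≠ 0) (h3 : (3 : F) ≠ 0) {a b : F}
    (ha : a ≠ 0) (hb : b ≠ 0) : BCT (fun x => σ x * x ^ 2) a b ≤ 5 := by
  set P := boomerangQuintic σ a b
  have hdeg : P.natDegree = 5 := natDegree_boomerangQuintic ha b
  have hP : P ≠ 0 := ne_zero_of_natDegree_gt (n := 0) (by omega)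
  have hsol : ∀ xy ∈ univ.filter (fun xy : F × F => σ xy.1 * xy.1 ^ 2 - σ xy.2 * xy.2 ^ 2 = b ∧
      σ (xy.1 + a) * (xy.1 + a) ^ 2 - σ (xy.2 + a) * (xy.2 + a) ^ 2 = b),
      xy.2 = -xy.1 - a ∧ P.eval (xy.1 - xy.2) = 0 := by
    intro xy hxy
    obtain ⟨h₁, h₂⟩ := (mem_filter.1 hxy).2
    exact eq_neg_sub_and_eval_boomerangQuintic_eq_zero hσ hcube h3 ha hb h₁ h₂
  calc BCT (fun x => σ x * x ^ 2) a b ≤ P.roots.toFinset.card := by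
        refine card_le_card_of_injOn (fun xy => xy.1 - xy.2) (fun xy hxy => ?_) ?_
        · exact Multiset.mem_toFinset.2 ((mem_roots hP).2 (hsol xy hxy).2)
        · intro xy hxy xy' hxy' h
          have hy := (hsol xy hxy).1
          have hy' := (hsol xy' hxy').1
          have hx : xy.1 = xy'.1 := mul_left_cancel₀ h2 (by linear_combination h + hy - hy')
          exact Prod.ext hx (by rw [hy, hy', hx])
    _ ≤ P.natDegree := (Multiset.toFinset_card_le _).trans (card_roots' P)
    _ = 5 := hdeg

theorem BU_le_five [Fintype F] [DecidableEq F] (hσ : Function.Involutive σ)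
    (hcube : ∀ ρ : F, ρ ^ 3 = 1 → σ ρ = ρ) (h2 : (2 : F) ≠ 0) (h3 : (3 : F) ≠ 0) :
    BU (fun x => σ x * x ^ 2) ≤ 5 :=
  Finset.sup_le fun _ hab =>
    BCT_le_five hσ hcube h2 h3 (mem_filter.1 hab).2.1 (mem_filter.1 hab).2.2

end Involution

theorem bu_f4_le_five_general (p m : ℕ) (hp : p.Prime) (hpodd : Odd p)
    (hmod : p ^ m % 3 = 1)
    {F : Type*} [Field F] [Fintype F] [DecidableEq F]
    (hF : Fintype.card F = p ^ (2 * m)) :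
    BU (fun x : F => x ^ (p ^ m + 2)) ≤ 5 := by
  have := Fact.mk hp
  have := charP_of_card_eq_prime_pow hF
  have hp2 : p ≠ 2 := by
    rintro rfl
    exact Nat.not_even_iff_odd.2 hpodd even_two
  have hp3 : p ≠ 3 := by
    rintro rfl
    rcases m with _ | m
    · exact (Fintype.one_lt_card (α := F)).ne' (by simpa using hF)
    · simp [pow_succ] at hmod
  set σ := iterateFrobenius F p m
  have hσ : Function.Involutive σ := fun z => by
    rw [iterateFrobenius_def, iterateFrobenius_def, ← pow_mul, ← pow_add, ← two_mul, ← hF,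
      FiniteField.pow_card]
  have hcube : ∀ ρ : F, ρ ^ 3 = 1 → σ ρ = ρ := fun ρ hρ => by
    rw [iterateFrobenius_def, ← Nat.div_add_mod (p ^ m) 3, hmod, pow_add, pow_mul, hρ, one_pow,
      one_mul, pow_one]
  have h2 : (2 : F) ≠ 0 := by exact_mod_cast CharP.cast_ne_zero_of_ne_of_prime F Nat.prime_two hp2
  have h3 : (3 : F) ≠ 0 := by
    exact_mod_cast CharP.cast_ne_zero_of_ne_of_prime F Nat.prime_three hp3
  convert BU_le_five hσ hcube h2 h3 using 3 with x
  rw [pow_add, iterateFrobenius_def]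

theorem bu_f4_le_five (p m : ℕ) (hp : p.Prime) (hpodd : Odd p) (hm : 1 ≤ m)
    (hmod : p ^ m % 3 = 1)
    {F : Type*} [Field F] [Fintype F] [DecidableEq F]
    (hF : Fintype.card F = p ^ (2 * m)) :
    BU (fun x : F => x ^ (p ^ m + 2)) ≤ 5 :=
  bu_f4_le_five_general p m hp hpodd hmod hF
end

section
/- Let n ≥ 1, let σ be the permutation of F_{3^n} with σ(0) = 1, σ(1) = −1, σ(−1) = 0, and σ(x) = x for all other x, and let f(X) = (σ(X))^{3^n−2} (the composition of the inverse function with the 3-cycle (0 1 −1)). Then the (classical) differential uniformity of f is Δ_f = 3 if n is odd, and Δ_f = 4 if n is even. -/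
/-!
In characteristic 3 the prime field is `𝔽₃ = {0, 1, -1} = {x | x ^ 3 = x}`, the inverse fixes it
pointwise, and composing with the 3-cycle gives `f x = x⁻¹ + 1` on `𝔽₃` and `f x = x⁻¹` elsewhere.
If `a ∈ 𝔽₃`, the indicator cancels in `f (x + a) - f x`, so the DDT entries are those of the
inverse function, at most 3 in characteristic 3. If `a ∉ 𝔽₃`, sort the solutions of
`f (x + a) - f x = b` by whether `x ∈ 𝔽₃`, `x + a ∈ 𝔽₃`, or neither. The last are roots of
`b x (x + a) = -a`, so there are at most two of them. Each of the first two classes holds at most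
one solution, because two distinct solutions of `(x + a)⁻¹ - x⁻¹ = c` either add up to `-a` or one
of them is `a`. A solution in each of these two classes yields a square root of `-1`, which exists
in `𝔽_{3^n}` iff `n` is even. The bounds are attained at `(a, b) = (1, 1)` and at `(i, i)` with
`i ^ 2 = -1`.
-/

open Finset

namespace FiniteField

variable {K : Type*} [Field K] [Fintype K]

theorem pow_card_sub_two_eq_inv_s18 (hK : 2 < Fintype.card K) (x : K) :
    x ^ (Fintype.card K - 2) = x⁻¹ := by
  rcases eq_or_ne x 0 with rfl | hx
  · rw [inv_zero, zero_pow (by omega)]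
  · refine eq_inv_of_mul_eq_one_right ?_
    rw [← pow_succ', show Fintype.card K - 2 + 1 = Fintype.card K - 1 by omega,
      pow_card_sub_one_eq_one x hx]

theorem isSquare_neg_one_iff_even {n : ℕ} (hK : Fintype.card K = 3 ^ n) :
    IsSquare (-1 : K) ↔ Even n := by
  rw [isSquare_neg_one_iff, hK]
  rcases n.even_or_odd with ⟨k, rfl⟩ | ⟨k, rfl⟩
  · simp [← two_mul, pow_mul, Nat.pow_mod]
  · simp [pow_succ, pow_mul, Nat.mul_mod, Nat.pow_mod]

end FiniteField

section PowThree

variable {R : Type*} [CommRing R]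

theorem pow_three_eq_self_iff [NoZeroDivisors R] {x : R} : x ^ 3 = x ↔ x = 0 ∨ x = 1 ∨ x = -1 := by
  rw [← sub_eq_zero, show x ^ 3 - x = x * ((x - 1) * (x + 1)) by ring, mul_eq_zero, mul_eq_zero,
    sub_eq_zero, add_eq_zero_iff_eq_neg]

theorem add_pow_three_eq_self (h3 : (3 : R) = 0) {x y : R} (hx : x ^ 3 = x) (hy : y ^ 3 = y) :
    (x + y) ^ 3 = x + y := by
  linear_combination hx + hy + (x ^ 2 * y + x * y ^ 2) * h3

theorem add_pow_three_eq_self_iff (h3 : (3 : R) = 0) {t : R} (ht : t ^ 3 = t) (x : R) :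
    (x + t) ^ 3 = x + t ↔ x ^ 3 = x := by
  refine ⟨fun h => ?_, fun hx => add_pow_three_eq_self h3 hx ht⟩
  simpa using add_pow_three_eq_self h3 h (show (-t) ^ 3 = -t by linear_combination -ht)

end PowThree

theorem Finset.card_le_two_of_forall_add_eq {G : Type*} [AddCommGroup G] [DecidableEq G]
    {s : Finset G} {c : G} (h : ∀ x ∈ s, ∀ y ∈ s, x ≠ y → x + y = c) : #s ≤ 2 := by
  rcases s.eq_empty_or_nonempty with rfl | ⟨x, hx⟩
  · simp
  · refine (card_le_card fun y hy => ?_).trans (card_le_two (a := x) (b := c - x))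
    rcases eq_or_ne x y with rfl | hxy
    · simp
    · simp [eq_sub_of_add_eq' (h x hx y hy hxy)]

section Inverse

variable {F : Type*} [Field F]

theorem inv_eq_self_of_pow_three_eq_self {x : F} (hx : x ^ 3 = x) : x⁻¹ = x := by
  rcases pow_three_eq_self_iff.1 hx with rfl | rfl | rfl <;> simp

theorem eq_or_add_eq_neg_of_inv_add_sub_inv_eq {a x y : F} (ha : a ≠ 0) (hx : x ≠ 0)
    (hxa : x + a ≠ 0) (hy : y ≠ 0) (hya : y + a ≠ 0)
    (h : (x + a)⁻¹ - x⁻¹ = (y + a)⁻¹ - y⁻¹) : x = y ∨ x + y = -a := by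
  field_simp at h
  have : (x - y) * (x + y + a) = 0 := by
    apply mul_left_cancel₀ ha
    linear_combination h
  rcases mul_eq_zero.1 this with h | h
  · exact Or.inl (sub_eq_zero.1 h)
  · exact Or.inr (by linear_combination h)

theorem eq_of_inv_add_sub_inv_eq_inv (h3 : (3 : F) = 0) {a y : F} (ha : a ≠ 0) (hy : y ≠ 0)
    (hya : y + a ≠ 0) (h : (y + a)⁻¹ - y⁻¹ = a⁻¹) : y = a := by
  field_simp at h
  have : (y - a) ^ 2 = 0 := by linear_combination -h - a * y * h3
  exact sub_eq_zero.1 (pow_eq_zero_iff two_ne_zero |>.1 this)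

theorem eq_or_add_eq_neg_or_eq_of_inv_add_sub_inv_eq (h3 : (3 : F) = 0) {a x y : F} (ha : a ≠ 0)
    (h : (x + a)⁻¹ - x⁻¹ = (y + a)⁻¹ - y⁻¹) : x = y ∨ x + y = -a ∨ x = a ∨ y = a := by
  -- with the convention `0⁻¹ = 0`, both poles `0` and `-a` take the value `a⁻¹`
  have hpole : ∀ z : F, z = 0 ∨ z = -a → (z + a)⁻¹ - z⁻¹ = a⁻¹ := by
    rintro z (rfl | rfl) <;> simp
  by_cases hx : x = 0 ∨ x = -a <;> by_cases hy : y = 0 ∨ y = -a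
  · rcases hx with rfl | rfl <;> rcases hy with rfl | rfl <;> simp
  · push Not at hy
    refine Or.inr (Or.inr (Or.inr (eq_of_inv_add_sub_inv_eq_inv h3 ha hy.1 ?_ ?_)))
    · exact fun h => hy.2 (eq_neg_of_add_eq_zero_left h)
    · rw [← h, hpole x hx]
  · push Not at hx
    refine Or.inr (Or.inr (Or.inl (eq_of_inv_add_sub_inv_eq_inv h3 ha hx.1 ?_ ?_)))
    · exact fun h => hx.2 (eq_neg_of_add_eq_zero_left h)
    · rw [h, hpole y hy]
  · push Not at hx hy
    have := eq_or_add_eq_neg_of_inv_add_sub_inv_eq ha hx.1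
      (fun h => hx.2 (eq_neg_of_add_eq_zero_left h)) hy.1
      (fun h => hy.2 (eq_neg_of_add_eq_zero_left h)) h
    tauto

theorem isSquare_neg_one_of_inv_add_sub_inv_eq (h3 : (3 : F) = 0) {a x y : F} (ha : a ^ 3 ≠ a)
    (hx : x ^ 3 = x) (hya : (y + a) ^ 3 = y + a)
    (h : (x + a)⁻¹ - x⁻¹ - 1 = (y + a)⁻¹ - y⁻¹ + 1) : IsSquare (-1 : F) := by
  have hxa : x + a ≠ 0 := fun h0 => ha (by
    rw [eq_neg_of_add_eq_zero_right h0]; linear_combination -hx)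
  have hy : y ≠ 0 := fun h0 => ha (by simpa [h0] using hya)
  rw [inv_eq_self_of_pow_three_eq_self hx, inv_eq_self_of_pow_three_eq_self hya] at h
  field_simp at h
  -- with `u = x + a`, `h` reads `u + y = (δ + 2) u y` for `δ = u + y ∈ 𝔽₃`;
  -- `δ = 0` and `δ = 1` are impossible, and `δ = -1` gives `(u - 1) ^ 2 = -1`
  have hδ : (x + (y + a)) ^ 3 = x + (y + a) := add_pow_three_eq_self h3 hx hya
  rcases pow_three_eq_self_iff.1 hδ with hδ | hδ | hδ
  · exact absurd (by linear_combination h + ((x + a) * y - 1) * hδ + (x + a) * y * h3)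
      (mul_ne_zero hxa hy)
  · exact absurd (by linear_combination h - (1 - (x + a) * y) * hδ + (x + a) * y * h3)
      (one_ne_zero (α := F))
  · refine ⟨x + a - 1, by linear_combination -h + (x + a - 1) * h3 +
      (-(x + a) * (x + (y + a)) + (x + a) ^ 2 - (x + a) + 1) * hδ⟩

end Inverse

section InvAddIndicator

variable {F : Type*} [Field F] [DecidableEq F] {f : F → F}

def threeCycle (x : F) : F :=
  if x = 0 then 1 else if x = 1 then -1 else if x = -1 then 0 else x

theorem inv_threeCycle (h3 : (3 : F) = 0) (x : F) :
    (threeCycle x)⁻¹ = x⁻¹ + if x ^ 3 = x then 1 else 0 := by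
  have hne : (-1 : F) ≠ 1 := fun h => one_ne_zero (by linear_combination h3 + h)
  rcases eq_or_ne x 0 with rfl | h0
  · simp [threeCycle]
  rcases eq_or_ne x 1 with rfl | h1
  · simp only [threeCycle, one_ne_zero, if_false, if_true, one_pow, inv_neg, inv_one]
    linear_combination -h3
  rcases eq_or_ne x (-1) with rfl | hm
  · have hm3 : (-1 : F) ^ 3 = -1 := by norm_num
    simp [threeCycle, hne, hm3]
  have hx : x ^ 3 ≠ x := by simp [pow_three_eq_self_iff, h0, h1, hm]
  simp [threeCycle, h0, h1, hm, hx]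

theorem apply_add_sub_apply_of_pow_three_eq_self (h3 : (3 : F) = 0)
    (hf : ∀ x, f x = x⁻¹ + if x ^ 3 = x then 1 else 0) {a : F} (ha : a ^ 3 = a) (x : F) :
    f (x + a) - f x = (x + a)⁻¹ - x⁻¹ := by
  simp only [hf, add_pow_three_eq_self_iff h3 ha]
  ring

theorem apply_add_sub_apply_eq_sub_one (h3 : (3 : F) = 0)
    (hf : ∀ x, f x = x⁻¹ + if x ^ 3 = x then 1 else 0) {a x : F} (ha : a ^ 3 ≠ a)
    (hx : x ^ 3 = x) : f (x + a) - f x = (x + a)⁻¹ - x⁻¹ - 1 := by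
  rw [hf, hf, if_pos hx, if_neg (by rwa [add_comm, add_pow_three_eq_self_iff h3 hx])]
  ring

theorem apply_add_sub_apply_eq_add_one (h3 : (3 : F) = 0)
    (hf : ∀ x, f x = x⁻¹ + if x ^ 3 = x then 1 else 0) {a x : F} (ha : a ^ 3 ≠ a)
    (hxa : (x + a) ^ 3 = x + a) : f (x + a) - f x = (x + a)⁻¹ - x⁻¹ + 1 := by
  have hx : x ^ 3 ≠ x := fun hx => ha (by rwa [add_comm, add_pow_three_eq_self_iff h3 hx] at hxa)
  rw [hf, hf, if_pos hxa, if_neg hx]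
  ring

theorem apply_add_sub_apply_of_pow_three_ne_self
    (hf : ∀ x, f x = x⁻¹ + if x ^ 3 = x then 1 else 0) {a x : F} (hx : x ^ 3 ≠ x)
    (hxa : (x + a) ^ 3 ≠ x + a) : f (x + a) - f x = (x + a)⁻¹ - x⁻¹ := by
  rw [hf, hf, if_neg hx, if_neg hxa]
  ring

end InvAddIndicator

section DifferentialUniformity

variable {F : Type*} [Field F] [Fintype F] [DecidableEq F]

theorem cDDT_one_eq_card (f : F → F) (a b : F) : cDDT f 1 a b = #{x | f (x + a) - f x = b} := by
  simp [cDDT]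

theorem DU_le {f : F → F} {m : ℕ} (h : ∀ a b : F, a ≠ 0 → cDDT f 1 a b ≤ m) : DU f ≤ m :=
  Finset.sup_le fun ab hab => h ab.1 ab.2 ((mem_filter.1 hab).2 rfl)

theorem cDDT_le_DU (f : F → F) {a : F} (b : F) (ha : a ≠ 0) : cDDT f 1 a b ≤ DU f :=
  Finset.le_sup (f := fun ab : F × F => cDDT f 1 ab.1 ab.2) (s := univ.filter _)
    (mem_filter.2 ⟨mem_univ (a, b), fun _ => ha⟩)

theorem card_inv_add_sub_inv_eq_le_three (h3 : (3 : F) = 0) {a : F} (ha : a ≠ 0) (b : F) :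
    #{x : F | (x + a)⁻¹ - x⁻¹ = b} ≤ 3 := by
  set s : Finset F := {x : F | (x + a)⁻¹ - x⁻¹ = b}
  have h2 : #(s.erase a) ≤ 2 := by
    refine card_le_two_of_forall_add_eq (c := -a) fun x hx y hy hxy => ?_
    simp only [s, mem_erase, mem_filter, mem_univ, true_and] at hx hy
    rcases eq_or_add_eq_neg_or_eq_of_inv_add_sub_inv_eq h3 ha (hx.2.trans hy.2.symm)
      with h | h | h | h
    exacts [absurd h hxy, h, absurd h hx.1, absurd h hy.1]
  have := pred_card_le_card_erase (s := s) (a := a)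
  omega

variable {f : F → F}

theorem cDDT_le_three_of_pow_three_eq_self (h3 : (3 : F) = 0)
    (hf : ∀ x, f x = x⁻¹ + if x ^ 3 = x then 1 else 0) {a : F} (ha₀ : a ≠ 0) (ha : a ^ 3 = a)
    (b : F) : cDDT f 1 a b ≤ 3 := by
  rw [cDDT_one_eq_card]
  simp only [apply_add_sub_apply_of_pow_three_eq_self h3 hf ha]
  exact card_inv_add_sub_inv_eq_le_three h3 ha₀ b

theorem card_filter_pow_three_eq_self_le_one (h3 : (3 : F) = 0)
    (hf : ∀ x, f x = x⁻¹ + if x ^ 3 = x then 1 else 0) {a : F} (ha : a ^ 3 ≠ a) (b : F) :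
    #{x | f (x + a) - f x = b ∧ x ^ 3 = x} ≤ 1 := by
  refine card_le_one.2 fun x hx y hy => ?_
  simp only [mem_filter, mem_univ, true_and] at hx hy
  obtain ⟨hx, hx3⟩ := hx
  obtain ⟨hy, hy3⟩ := hy
  rw [apply_add_sub_apply_eq_sub_one h3 hf ha hx3] at hx
  rw [apply_add_sub_apply_eq_sub_one h3 hf ha hy3] at hy
  have ha₀ : a ≠ 0 := by rintro rfl; simp at ha
  have hxy : (x + a)⁻¹ - x⁻¹ = (y + a)⁻¹ - y⁻¹ := by linear_combination hx - hy
  rcases eq_or_add_eq_neg_or_eq_of_inv_add_sub_inv_eq h3 ha₀ hxy with h | h | rfl | rfl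
  · exact h
  · have := add_pow_three_eq_self h3 hx3 hy3
    rw [h] at this
    exact absurd (by linear_combination -this) ha
  · exact absurd hx3 ha
  · exact absurd hy3 ha

theorem card_filter_add_pow_three_eq_self_le_one (h3 : (3 : F) = 0)
    (hf : ∀ x, f x = x⁻¹ + if x ^ 3 = x then 1 else 0) {a : F} (ha : a ^ 3 ≠ a) (b : F) :
    #{x | f (x + a) - f x = b ∧ (x + a) ^ 3 = x + a} ≤ 1 := by
  refine card_le_one.2 fun x hx y hy => ?_
  simp only [mem_filter, mem_univ, true_and] at hx hy
  obtain ⟨hx, hx3⟩ := hx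
  obtain ⟨hy, hy3⟩ := hy
  rw [apply_add_sub_apply_eq_add_one h3 hf ha hx3] at hx
  rw [apply_add_sub_apply_eq_add_one h3 hf ha hy3] at hy
  have ha₀ : a ≠ 0 := by rintro rfl; simp at ha
  have h2a : a + a = -a := by linear_combination h3 * a
  have hxy : (x + a)⁻¹ - x⁻¹ = (y + a)⁻¹ - y⁻¹ := by linear_combination hx - hy
  rcases eq_or_add_eq_neg_or_eq_of_inv_add_sub_inv_eq h3 ha₀ hxy with h | h | rfl | rfl
  · exact h
  · have := add_pow_three_eq_self h3 hx3 hy3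
    rw [show x + a + (y + a) = a by linear_combination h] at this
    exact absurd this ha
  · rw [h2a] at hx3
    exact absurd (by linear_combination -hx3) ha
  · rw [h2a] at hy3
    exact absurd (by linear_combination -hy3) ha

theorem card_filter_pow_three_ne_self_le_two
    (hf : ∀ x, f x = x⁻¹ + if x ^ 3 = x then 1 else 0) {a : F} (ha : a ≠ 0) (b : F) :
    #{x | f (x + a) - f x = b ∧ x ^ 3 ≠ x ∧ (x + a) ^ 3 ≠ x + a} ≤ 2 := by
  have ne_zero : ∀ z : F, z ^ 3 ≠ z → z ≠ 0 := by rintro z hz rfl; simp at hz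
  refine card_le_two_of_forall_add_eq (c := -a) fun x hx y hy hxy => ?_
  simp only [mem_filter, mem_univ, true_and] at hx hy
  obtain ⟨hx, hx3, hxa3⟩ := hx
  obtain ⟨hy, hy3, hya3⟩ := hy
  rw [apply_add_sub_apply_of_pow_three_ne_self hf hx3 hxa3] at hx
  rw [apply_add_sub_apply_of_pow_three_ne_self hf hy3 hya3] at hy
  exact (eq_or_add_eq_neg_of_inv_add_sub_inv_eq ha (ne_zero x hx3) (ne_zero _ hxa3)
    (ne_zero y hy3) (ne_zero _ hya3) (hx.trans hy.symm)).resolve_left hxy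

theorem cDDT_le_of_pow_three_ne_self
    (hf : ∀ x, f x = x⁻¹ + if x ^ 3 = x then 1 else 0) {a : F} (ha : a ^ 3 ≠ a) (b : F) :
    cDDT f 1 a b ≤ #{x | f (x + a) - f x = b ∧ x ^ 3 = x} +
      #{x | f (x + a) - f x = b ∧ (x + a) ^ 3 = x + a} + 2 := by
  have ha₀ : a ≠ 0 := by rintro rfl; simp at ha
  set A : Finset F := {x | f (x + a) - f x = b ∧ x ^ 3 = x}
  set B : Finset F := {x | f (x + a) - f x = b ∧ (x + a) ^ 3 = x + a}
  set C : Finset F := {x | f (x + a) - f x = b ∧ x ^ 3 ≠ x ∧ (x + a) ^ 3 ≠ x + a}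
  rw [cDDT_one_eq_card]
  calc #{x | f (x + a) - f x = b}
      ≤ #(A ∪ B ∪ C) := card_le_card fun x hx => by
        simp only [A, B, C, mem_union, mem_filter, mem_univ, true_and] at hx ⊢
        tauto
    _ ≤ #A + #B + #C := (card_union_le _ _).trans (Nat.add_le_add_right (card_union_le _ _) _)
    _ ≤ #A + #B + 2 := Nat.add_le_add_left (card_filter_pow_three_ne_self_le_two hf ha₀ b) _

theorem cDDT_le_four (h3 : (3 : F) = 0) (hf : ∀ x, f x = x⁻¹ + if x ^ 3 = x then 1 else 0)
    {a : F} (ha : a ≠ 0) (b : F) : cDDT f 1 a b ≤ 4 := by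
  by_cases ha3 : a ^ 3 = a
  · exact (cDDT_le_three_of_pow_three_eq_self h3 hf ha ha3 b).trans (by norm_num)
  · have := cDDT_le_of_pow_three_ne_self hf ha3 b
    have := card_filter_pow_three_eq_self_le_one h3 hf ha3 b
    have := card_filter_add_pow_three_eq_self_le_one h3 hf ha3 b
    omega

theorem cDDT_le_three (h3 : (3 : F) = 0) (hf : ∀ x, f x = x⁻¹ + if x ^ 3 = x then 1 else 0)
    (hsq : ¬IsSquare (-1 : F)) {a : F} (ha : a ≠ 0) (b : F) : cDDT f 1 a b ≤ 3 := by
  by_cases ha3 : a ^ 3 = a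
  · exact cDDT_le_three_of_pow_three_eq_self h3 hf ha ha3 b
  have := cDDT_le_of_pow_three_ne_self hf ha3 b
  have := card_filter_pow_three_eq_self_le_one h3 hf ha3 b
  have := card_filter_add_pow_three_eq_self_le_one h3 hf ha3 b
  suffices #{x | f (x + a) - f x = b ∧ x ^ 3 = x} = 0 ∨
      #{x | f (x + a) - f x = b ∧ (x + a) ^ 3 = x + a} = 0 by omega
  by_contra! h
  obtain ⟨x, hx⟩ := card_pos.1 (Nat.pos_of_ne_zero h.1)
  obtain ⟨y, hy⟩ := card_pos.1 (Nat.pos_of_ne_zero h.2)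
  simp only [mem_filter, mem_univ, true_and] at hx hy
  refine hsq (isSquare_neg_one_of_inv_add_sub_inv_eq h3 ha3 hx.2 hy.2 ?_)
  rw [← apply_add_sub_apply_eq_sub_one h3 hf ha3 hx.2,
    ← apply_add_sub_apply_eq_add_one h3 hf ha3 hy.2, hx.1, hy.1]

theorem three_le_cDDT_one_one (h3 : (3 : F) = 0)
    (hf : ∀ x, f x = x⁻¹ + if x ^ 3 = x then 1 else 0) : 3 ≤ cDDT f 1 1 1 := by
  have hne : (1 : F) ≠ -1 := fun h => one_ne_zero (by linear_combination h3 - h)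
  rw [cDDT_one_eq_card]
  refine (card_eq_three.2 ⟨0, 1, -1, zero_ne_one, by simp, hne, rfl⟩).symm.le.trans
    (card_le_card fun x hx => ?_)
  simp only [mem_insert, mem_singleton] at hx
  simp only [mem_filter, mem_univ, true_and,
    apply_add_sub_apply_of_pow_three_eq_self h3 hf (one_pow 3)]
  rcases hx with rfl | rfl | rfl
  · simp
  · rw [show (1 : F) + 1 = -1 by linear_combination h3]
    simp only [inv_neg, inv_one]
    linear_combination -h3
  · simp

theorem four_le_cDDT_of_neg_one_eq_mul_self (h3 : (3 : F) = 0)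
    (hf : ∀ x, f x = x⁻¹ + if x ^ 3 = x then 1 else 0) {i : F} (hi : -1 = i * i) :
    4 ≤ cDDT f 1 i i := by
  have hi₀ : i ≠ 0 := by rintro rfl; simp at hi
  have hi3 : i ^ 3 ≠ i := fun h => hi₀ (by linear_combination h + i * hi + i * h3)
  have hoff : ∀ s e : F, s ^ 3 = s → e ^ 3 ≠ e → (s + e) ^ 3 ≠ s + e := fun s e hs he => by
    rwa [Ne, add_comm, add_pow_three_eq_self_iff h3 hs]
  have hneg3 : (-i) ^ 3 ≠ -i := fun h => hi3 (by linear_combination -h)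
  have hinv₁ : (1 + i)⁻¹ = i - 1 := inv_eq_of_mul_eq_one_right (by linear_combination -hi - h3)
  have hinv₂ : (1 - i)⁻¹ = -1 - i := inv_eq_of_mul_eq_one_right (by linear_combination -hi - h3)
  -- one solution in `𝔽₃`, one in `𝔽₃ - i`, and the two roots `±1 + i` of `x (x + i) = -1`
  rw [cDDT_one_eq_card]
  refine (card_eq_four.2 ⟨1, 1 - i, 1 + i, -1 + i, ?_, ?_, ?_, ?_, ?_, ?_, rfl⟩).symm.le.trans
    (card_le_card fun x hx => ?_)
  · exact fun h => hi₀ (by linear_combination h)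
  · exact fun h => hi₀ (by linear_combination -h)
  · exact fun h => one_ne_zero (α := F) (by linear_combination -2 * hi + 2 * (2 + i) * h - 3 * h3)
  · exact fun h => hi₀ (by linear_combination h + i * h3)
  · exact fun h => one_ne_zero (α := F)
      (by linear_combination h3 + hi + (i + 1) * h + (i + 1) * (i - 1) * h3)
  · exact fun h => one_ne_zero (α := F) (by linear_combination h3 - h)
  simp only [mem_insert, mem_singleton] at hx
  simp only [mem_filter, mem_univ, true_and]
  rcases hx with rfl | rfl | rfl | rfl
  · rw [apply_add_sub_apply_eq_sub_one h3 hf hi3 (one_pow 3), hinv₁, inv_one]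
    linear_combination -h3
  · rw [apply_add_sub_apply_eq_add_one h3 hf hi3 (by rw [sub_add_cancel, one_pow]),
      sub_add_cancel, inv_one, hinv₂]
    linear_combination h3
  · have h2i : 1 + i + i = 1 + -i := by linear_combination i * h3
    rw [apply_add_sub_apply_of_pow_three_ne_self hf (hoff 1 i (one_pow 3) hi3)
      (h2i ▸ hoff 1 (-i) (one_pow 3) hneg3), h2i, ← sub_eq_add_neg, hinv₁, hinv₂]
    linear_combination -i * h3
  · have h2i : -1 + i + i = -1 + -i := by linear_combination i * h3
    have hm : (-1 : F) ^ 3 = -1 := by norm_num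
    rw [apply_add_sub_apply_of_pow_three_ne_self hf (hoff (-1) i hm hi3)
      (h2i ▸ hoff (-1) (-i) hm hneg3), h2i, show (-1 : F) + -i = -(1 + i) by ring,
      show (-1 : F) + i = -(1 - i) by ring, inv_neg, inv_neg, hinv₁, hinv₂]
    linear_combination -i * h3

end DifferentialUniformity

theorem du_inverse_compose_three_cycle_char_three (n : ℕ) (hn : 1 ≤ n)
    {F : Type*} [Field F] [Fintype F] [DecidableEq F]
    (hF : Fintype.card F = 3 ^ n)
    (σ : F → F)
    (hσ : ∀ x : F, σ x =
      if x = 0 then 1 else if x = 1 then -1 else if x = -1 then 0 else x)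
    (f : F → F) (hf : ∀ x : F, f x = (σ x) ^ (3 ^ n - 2)) :
    (Odd n → DU f = 3) ∧ (Even n → DU f = 4) := by
  have h3 : (3 : F) = 0 := by
    have h := FiniteField.cast_card_eq_zero F
    rw [hF, Nat.cast_pow] at h
    exact eq_zero_of_pow_eq_zero (by exact_mod_cast h)
  have hq : 2 < Fintype.card F :=
    hF ▸ (by norm_num : 2 < 3).trans_le (Nat.le_self_pow (by omega) 3)
  have hf' : ∀ x, f x = x⁻¹ + if x ^ 3 = x then 1 else 0 := fun x => by
    rw [hf, ← hF, FiniteField.pow_card_sub_two_eq_inv_s18 hq, hσ]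
    exact inv_threeCycle h3 x
  refine ⟨fun hodd => le_antisymm (DU_le fun a b ha => cDDT_le_three h3 hf' ?_ ha b)
      ((three_le_cDDT_one_one h3 hf').trans (cDDT_le_DU f 1 one_ne_zero)), fun heven => ?_⟩
  · rwa [FiniteField.isSquare_neg_one_iff_even hF, Nat.not_even_iff_odd]
  · obtain ⟨i, hi⟩ := (FiniteField.isSquare_neg_one_iff_even hF).2 heven
    have hi₀ : i ≠ 0 := by rintro rfl; simp at hi
    exact le_antisymm (DU_le fun a b ha => cDDT_le_four h3 hf' ha b)
      ((four_le_cDDT_of_neg_one_eq_mul_self h3 hf' hi).trans (cDDT_le_DU f i hi₀))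
end
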